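/- Let m ≥ 4 and let G be the complete graph on a finite vertex set V with |V| = m. Then for every ordered pair (a,b) of distinct vertices, ‖P χ_(a,b)‖² = 2(m−2)/m. Moreover, for ordered pairs (a,b) and (c,d) of distinct vertices with {a,b} ≠ {c,d}, the normalized inner product ⟨P χ_(a,b), P χ_(c,d)⟩ / (‖P χ_(a,b)‖·‖P χ_(c,d)‖) equals: 1/(m−2) if exactly one endpoint is shared and it is the head of one pair and the tail of the other (b = c with a ≠ d, or a = d with b ≠ c); −1/(m−2) if exactly one endpoint is shared and it is the tail of both or the head of both (a = c with b ≠ d, or b = d with a ≠ c); and 0 if {a,b} ∩ {c,d} = ∅; while for (c,d) = (b,a) the normalized inner product is −1. -/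

import Mathlib

/-!
In `K_m` the cycle space is the orthogonal complement, within the antisymmetric edge functions,
of the cut space `{δg : (u, v) ↦ g v - g u}`. The boundary of `χ_(a,b)` is `e_b - e_a`, and that
of `δ(e_b - e_a)` is `m (e_b - e_a)`, so `P χ_(a,b) = χ_(a,b) - (1/m) δ(e_b - e_a)`. Since `P` is
a self-adjoint idempotent and `P χ_(a,b)` is antisymmetric,
`⟪P χ_(a,b), P χ_(c,d)⟫ = 2 (P χ_(a,b)) (c, d)`: every inner product is a coordinate of
`P χ_(a,b)`, and these coordinates can be read off the explicit formula.
-/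

open scoped BigOperators RealInnerProductSpace

noncomputable section

variable {V : Type*} [Fintype V] [DecidableEq V]

/-- The indicator chain `χ_(a,b)`: 1 at `(a,b)`, −1 at `(b,a)`, 0 elsewhere. -/
def edgeChi (a b : V) : EuclideanSpace ℝ (V × V) :=
  WithLp.toLp 2 (fun p => if p = (a, b) then 1 else if p = (b, a) then -1 else 0)

/-- The cycle space `H` of a simple graph `G`: the kernel of the boundary map
restricted to the edge space `C₁`. -/
def cycleSpace (G : SimpleGraph V) : Submodule ℝ (EuclideanSpace ℝ (V × V)) where
  carrier := { f | (∀ u v : V, f (u, v) = - f (v, u)) ∧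
               (∀ u v : V, ¬ G.Adj u v → f (u, v) = 0) ∧
               (∀ v : V, ∑ u : V, f (u, v) = 0) }
  add_mem' := by
    rintro f g ⟨hf1, hf2, hf3⟩ ⟨hg1, hg2, hg3⟩
    refine ⟨fun u v => ?_, fun u v h => ?_, fun v => ?_⟩
    · show f (u, v) + g (u, v) = -(f (v, u) + g (v, u))
      rw [hf1 u v, hg1 u v]; ring
    · show f (u, v) + g (u, v) = 0
      rw [hf2 u v h, hg2 u v h]; ring
    · show ∑ u : V, (f (u, v) + g (u, v)) = 0
      rw [Finset.sum_add_distrib, hf3 v, hg3 v]; ring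
  zero_mem' := by
    refine ⟨fun u v => ?_, fun u v h => ?_, fun v => ?_⟩ <;> simp
  smul_mem' := by
    rintro c f ⟨hf1, hf2, hf3⟩
    refine ⟨fun u v => ?_, fun u v h => ?_, fun v => ?_⟩
    · show c * f (u, v) = -(c * f (v, u))
      rw [hf1 u v]; ring
    · show c * f (u, v) = 0
      rw [hf2 u v h]; ring
    · show ∑ u : V, c * f (u, v) = 0
      rw [← Finset.mul_sum, hf3 v]; ring

/-- The projected edge vector `P χ_(a,b)`, where `P` is the orthogonal projection
onto the cycle space of `G`. -/
def projEdge (G : SimpleGraph V) (a b : V) : EuclideanSpace ℝ (V × V) :=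
  (Submodule.orthogonalProjectionOnto (cycleSpace G) (edgeChi a b) : EuclideanSpace ℝ (V × V))

section edgeChi

variable {V : Type*} [DecidableEq V] {a b : V}

lemma edgeChi_eq_single_sub_single (hab : a ≠ b) :
    edgeChi a b = EuclideanSpace.single (a, b) 1 - EuclideanSpace.single (b, a) 1 := by
  ext p
  simp only [edgeChi, PiLp.toLp_apply, PiLp.sub_apply, PiLp.single_apply]
  split_ifs <;> simp_all

lemma edgeChi_apply_swap (hab : a ≠ b) (u v : V) : edgeChi a b (v, u) = -edgeChi a b (u, v) := by
  simp only [edgeChi, PiLp.toLp_apply, Prod.mk.injEq]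
  split_ifs <;> simp_all

lemma edgeChi_apply_self (hab : a ≠ b) (u : V) : edgeChi a b (u, u) = 0 := by
  have := edgeChi_apply_swap hab u u
  linarith

variable [Fintype V]

lemma sum_edgeChi_apply (hab : a ≠ b) (v : V) :
    ∑ u, edgeChi a b (u, v) = (Pi.single b 1 - Pi.single a 1 : V → ℝ) v := by
  simp only [edgeChi, PiLp.toLp_apply, Prod.mk.injEq, Pi.sub_apply, Pi.single_apply]
  by_cases hvb : v = b <;> by_cases hva : v = a <;> simp_all

lemma inner_edgeChi_right (f : EuclideanSpace ℝ (V × V)) (hab : a ≠ b) :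
    ⟪f, edgeChi a b⟫ = f (a, b) - f (b, a) := by
  simp [edgeChi_eq_single_sub_single hab, inner_sub_right, EuclideanSpace.inner_single_right]

end edgeChi

section cycleSpace

variable {V : Type*} [Fintype V] {G : SimpleGraph V} {f : EuclideanSpace ℝ (V × V)}

lemma sum_apply_left_eq_zero_of_mem_cycleSpace (hf : f ∈ cycleSpace G) (u : V) :
    ∑ v, f (u, v) = 0 := by
  simp_rw [hf.1 u, Finset.sum_neg_distrib, hf.2.2 u, neg_zero]

lemma inner_edgeChi_of_mem_cycleSpace [DecidableEq V] (hf : f ∈ cycleSpace G) {c d : V}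
    (hcd : c ≠ d) : ⟪f, edgeChi c d⟫ = 2 * f (c, d) := by
  rw [inner_edgeChi_right f hcd, hf.1 d c]
  ring

variable [DecidableEq V]

lemma inner_projEdge_projEdge (G : SimpleGraph V) (a b : V) {c d : V} (hcd : c ≠ d) :
    ⟪projEdge G a b, projEdge G c d⟫ = 2 * projEdge G a b (c, d) := by
  rw [projEdge, projEdge, ← Submodule.coe_inner,
    Submodule.inner_orthogonalProjectionOnto_eq_of_mem_left]
  exact inner_edgeChi_of_mem_cycleSpace (Submodule.coe_mem _) hcd

lemma inner_div_norm_mul_norm_projEdge {a b c d : V} (hab : a ≠ b) (hcd : c ≠ d)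
    (hnorm : ‖projEdge G c d‖ = ‖projEdge G a b‖) :
    ⟪projEdge G a b, projEdge G c d⟫ / (‖projEdge G a b‖ * ‖projEdge G c d‖)
      = projEdge G a b (c, d) / projEdge G a b (a, b) := by
  rw [hnorm, ← sq, ← real_inner_self_eq_norm_sq, inner_projEdge_projEdge G a b hcd,
    inner_projEdge_projEdge G a b hab, mul_div_mul_left _ _ two_ne_zero]

end cycleSpace

section coboundary

variable {V : Type*}

def coboundary (g : V → ℝ) : EuclideanSpace ℝ (V × V) :=
  WithLp.toLp 2 (fun p => g p.2 - g p.1)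

@[simp]
lemma coboundary_apply (g : V → ℝ) (p : V × V) : coboundary g p = g p.2 - g p.1 := rfl

variable [Fintype V]

lemma sum_coboundary_apply (g : V → ℝ) (v : V) :
    ∑ u, coboundary g (u, v) = Fintype.card V * g v - ∑ u, g u := by
  simp [Finset.sum_sub_distrib]

lemma inner_coboundary_eq_zero_of_mem_cycleSpace {G : SimpleGraph V}
    {f : EuclideanSpace ℝ (V × V)} (g : V → ℝ) (hf : f ∈ cycleSpace G) :
    ⟪coboundary g, f⟫ = 0 := by
  have hin : ∑ u, ∑ v, g v * f (u, v) = 0 := by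
    rw [Finset.sum_comm]
    simp [← Finset.mul_sum, hf.2.2]
  have hout : ∑ u, ∑ v, g u * f (u, v) = 0 := by
    simp [← Finset.mul_sum, sum_apply_left_eq_zero_of_mem_cycleSpace hf]
  simp only [PiLp.inner_apply, coboundary_apply, RCLike.inner_apply, conj_trivial,
    Fintype.sum_prod_type]
  simp only [mul_comm (f _), sub_mul, Finset.sum_sub_distrib, hin, hout, sub_zero]

end coboundary

section completeGraph

variable {V : Type*} [Fintype V] [DecidableEq V] {a b : V}

lemma edgeChi_sub_coboundary_mem_cycleSpace_top (hab : a ≠ b) :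
    edgeChi a b - (Fintype.card V : ℝ)⁻¹ • coboundary (Pi.single b 1 - Pi.single a 1)
      ∈ cycleSpace (⊤ : SimpleGraph V) := by
  have hcard : (Fintype.card V : ℝ) ≠ 0 := Nat.cast_ne_zero.2 (Fintype.card_pos_iff.2 ⟨a⟩).ne'
  refine ⟨fun u v => ?_, fun u v huv => ?_, fun v => ?_⟩
  · simp only [PiLp.sub_apply, PiLp.smul_apply, coboundary_apply, smul_eq_mul,
      edgeChi_apply_swap hab v u]
    ring
  · obtain rfl : u = v := by simpa using huv
    simp [edgeChi_apply_self hab]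
  · simp only [PiLp.sub_apply, PiLp.smul_apply, smul_eq_mul, Finset.sum_sub_distrib,
      ← Finset.mul_sum, sum_edgeChi_apply hab, sum_coboundary_apply]
    simp [Finset.sum_sub_distrib, hcard]

lemma projEdge_top (hab : a ≠ b) :
    projEdge ⊤ a b
      = edgeChi a b - (Fintype.card V : ℝ)⁻¹ • coboundary (Pi.single b 1 - Pi.single a 1) :=
  Submodule.eq_starProjection_of_mem_of_inner_eq_zero
    (edgeChi_sub_coboundary_mem_cycleSpace_top hab) fun w hw => by
      rw [sub_sub_cancel, inner_smul_left, inner_coboundary_eq_zero_of_mem_cycleSpace _ hw,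
        mul_zero]

lemma projEdge_top_apply (hab : a ≠ b) (u v : V) :
    projEdge ⊤ a b (u, v) = edgeChi a b (u, v)
      - ((Pi.single b 1 - Pi.single a 1 : V → ℝ) v - (Pi.single b 1 - Pi.single a 1 : V → ℝ) u)
        / Fintype.card V := by
  rw [projEdge_top hab]
  simp [div_eq_inv_mul]

end completeGraph

/-- **Section 6.4: the crystal lattice of the complete graph `K_m`.** For `m ≥ 4`, every
projected edge vector has squared norm `2(m−2)/m`, and the normalized inner products of
two projected edge vectors are `1/(m−2)`, `−1/(m−2)`, `0` or `−1`, according to how the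
two ordered pairs of endpoints overlap. -/
theorem completeGraph_proj_norm_and_inner
    {V : Type*} [Fintype V] [DecidableEq V] (m : ℕ) (hm : 4 ≤ m)
    (hcard : Fintype.card V = m)
    (G : SimpleGraph V) (hG : G = (⊤ : SimpleGraph V)) :
    (∀ a b : V, a ≠ b → ‖projEdge G a b‖ ^ 2 = 2 * ((m : ℝ) - 2) / m) ∧
    (∀ a b c d : V, a ≠ b → c ≠ d →
      (((b = c ∧ a ≠ d) ∨ (a = d ∧ b ≠ c)) →
        ⟪projEdge G a b, projEdge G c d⟫ / (‖projEdge G a b‖ * ‖projEdge G c d‖)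
          = 1 / ((m : ℝ) - 2)) ∧
      (((a = c ∧ b ≠ d) ∨ (b = d ∧ a ≠ c)) →
        ⟪projEdge G a b, projEdge G c d⟫ / (‖projEdge G a b‖ * ‖projEdge G c d‖)
          = -(1 / ((m : ℝ) - 2))) ∧
      ((a ≠ c ∧ a ≠ d ∧ b ≠ c ∧ b ≠ d) →
        ⟪projEdge G a b, projEdge G c d⟫ / (‖projEdge G a b‖ * ‖projEdge G c d‖) = 0) ∧
      ((c = b ∧ d = a) →
        ⟪projEdge G a b, projEdge G c d⟫ / (‖projEdge G a b‖ * ‖projEdge G c d‖) = -1)) := by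
  subst hG hcard
  have hm2 : (Fintype.card V : ℝ) - 2 ≠ 0 := by
    have : (4 : ℝ) ≤ Fintype.card V := by exact_mod_cast hm
    linarith
  have hdiag : ∀ a b : V, a ≠ b →
      projEdge ⊤ a b (a, b) = (Fintype.card V - 2) / Fintype.card V := fun a b hab => by
    rw [projEdge_top_apply hab]
    simp [edgeChi, hab.symm]
    field_simp
    ring
  have hnorm : ∀ a b : V, a ≠ b →
      ‖projEdge ⊤ a b‖ ^ 2 = 2 * ((Fintype.card V : ℝ) - 2) / Fintype.card V := fun a b hab => by
    rw [← real_inner_self_eq_norm_sq, inner_projEdge_projEdge _ _ _ hab, hdiag a b hab]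
    ring
  refine ⟨hnorm, fun a b c d hab hcd => ?_⟩
  have hnorm_eq : ‖projEdge ⊤ c d‖ = ‖projEdge ⊤ a b‖ :=
    (sq_eq_sq₀ (norm_nonneg _) (norm_nonneg _)).1 (by rw [hnorm a b hab, hnorm c d hcd])
  rw [inner_div_norm_mul_norm_projEdge hab hcd hnorm_eq, hdiag a b hab, projEdge_top_apply hab]
  refine ⟨?_, ?_, ?_, ?_⟩
  · rintro (⟨rfl, h⟩ | ⟨rfl, h⟩) <;>
      simp [edgeChi, hab, hab.symm, hcd, hcd.symm, h.symm] <;> field_simp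
  · rintro (⟨rfl, h⟩ | ⟨rfl, h⟩) <;>
      simp [edgeChi, hab, hab.symm, hcd, hcd.symm, h.symm] <;> field_simp
  · rintro ⟨hac, had, hbc, hbd⟩
    simp [edgeChi, hac.symm, had.symm, hbc.symm, hbd.symm]
  · rintro ⟨rfl, rfl⟩
    simp [edgeChi, hab, hab.symm]
    field_simp
    ring

end
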